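/- arXiv:math/0305305 — 3 statements merged into one kernel-verified Lean document; each statement's English description precedes it below -/
import Mathlib

section
/- Let p be a prime. Then the number F_{g ANY, h ANY}(p) of pairs (g,h) with 1 ≤ g,h ≤ p-1 such that g^h ≡ h (mod p) satisfies |F_{g ANY, h ANY}(p) − (p-1)| ≤ d(p-1) · σ(p-1) · √p · (1 + ln p). -/
/-!
For fixed `h` prime to `p`, the solutions of `g ^ h = h` in `(ZMod p)ˣ` lie in a single coset of
the `gcd(h, p - 1)`-th roots of unity, so there are at most `gcd(h, p - 1)` of them. Summing over
`h` bounds the number of pairs by `∑ gcd(h, p - 1) ≤ (p - 1) d(p - 1)`, which, like `p - 1` itself,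
is already below `d(p - 1) σ(p - 1) √p (1 + log p)`.
-/

open Finset Polynomial

theorem card_filter_pow_eq_le_gcd {K : Type*} [Field K] [Fintype K] [DecidableEq K] {h : ℕ}
    (hh : h ≠ 0) {c : K} (hc : c ≠ 0) :
    #{x | x ^ h = c} ≤ h.gcd (Fintype.card K - 1) := by
  rcases eq_empty_or_nonempty ({x | x ^ h = c} : Finset K) with hempty | ⟨x₀, hx₀⟩
  · simp [hempty]
  rw [mem_filter] at hx₀
  have ne_zero_of_pow_eq {x : K} (hx : x ^ h = c) : x ≠ 0 := by
    rintro rfl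
    exact hc (by rw [← hx, zero_pow hh])
  have hx₀0 := ne_zero_of_pow_eq hx₀.2
  have maps : Set.MapsTo (· / x₀) ({x | x ^ h = c} : Finset K)
      (nthRoots (h.gcd (Fintype.card K - 1)) (1 : K)).toFinset := by
    intro x hx
    rw [mem_coe, mem_filter] at hx
    rw [mem_coe, Multiset.mem_toFinset,
      mem_nthRoots (Nat.gcd_pos_of_pos_left _ (Nat.pos_of_ne_zero hh)), pow_gcd_eq_one]
    exact ⟨by rw [div_pow, hx.2, hx₀.2, div_self hc],
      FiniteField.pow_card_sub_one_eq_one _ (div_ne_zero (ne_zero_of_pow_eq hx.2) hx₀0)⟩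
  calc #{x | x ^ h = c}
      ≤ (nthRoots (h.gcd (Fintype.card K - 1)) (1 : K)).toFinset.card :=
        card_le_card_of_injOn _ maps fun x _ y _ hxy => (div_left_inj' hx₀0).mp hxy
    _ ≤ Multiset.card (nthRoots (h.gcd (Fintype.card K - 1)) (1 : K)) :=
        Multiset.toFinset_card_le _
    _ ≤ h.gcd (Fintype.card K - 1) := card_nthRoots _ _

theorem card_filter_pow_modEq_le_gcd {p h : ℕ} (hp : p.Prime) (hph : ¬p ∣ h) :
    #{g ∈ range p | g ^ h ≡ h [MOD p]} ≤ h.gcd (p - 1) := by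
  have := Fact.mk hp
  have maps : Set.MapsTo (fun g : ℕ => (g : ZMod p))
      ({g ∈ range p | g ^ h ≡ h [MOD p]} : Finset ℕ) ({x | x ^ h = (h : ZMod p)} : Finset _) := by
    intro g hg
    rw [mem_coe, mem_filter, mem_range] at hg
    simpa using (ZMod.natCast_eq_natCast_iff _ _ _).mpr hg.2
  have inj : Set.InjOn (fun g : ℕ => (g : ZMod p))
      ({g ∈ range p | g ^ h ≡ h [MOD p]} : Finset ℕ) := by
    intro a ha b hb hab
    rw [mem_coe, mem_filter, mem_range] at ha hb
    exact ((ZMod.natCast_eq_natCast_iff _ _ _).mp hab).eq_of_lt_of_lt ha.1 hb.1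
  calc #{g ∈ range p | g ^ h ≡ h [MOD p]}
      ≤ #{x | x ^ h = (h : ZMod p)} := card_le_card_of_injOn _ maps inj
    _ ≤ h.gcd (Fintype.card (ZMod p) - 1) :=
        card_filter_pow_eq_le_gcd (by rintro rfl; exact hph (dvd_zero p))
          (by rwa [Ne, ZMod.natCast_eq_zero_iff])
    _ = h.gcd (p - 1) := by rw [ZMod.card]

theorem sum_Icc_gcd_le (n : ℕ) : ∑ h ∈ Icc 1 n, h.gcd n ≤ n * #n.divisors := by
  have maps (h : ℕ) (hh : h ∈ Icc 1 n) : h.gcd n ∈ n.divisors := by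
    rw [mem_Icc] at hh
    exact Nat.mem_divisors.mpr ⟨Nat.gcd_dvd_right _ _, by omega⟩
  have fiber_le (d : ℕ) : #{h ∈ Icc 1 n | h.gcd n = d} * d ≤ n := by
    calc #{h ∈ Icc 1 n | h.gcd n = d} * d ≤ #{h ∈ Ioc 0 n | d ∣ h} * d := by
          gcongr
          intro h hh
          simp only [mem_filter, mem_Icc, mem_Ioc] at hh ⊢
          exact ⟨⟨by omega, hh.1.2⟩, hh.2 ▸ Nat.gcd_dvd_left _ _⟩
      _ = n / d * d := by rw [Nat.Ioc_filter_dvd_card_eq_div]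
      _ ≤ n := Nat.div_mul_le_self n d
  calc ∑ h ∈ Icc 1 n, h.gcd n
      = ∑ d ∈ n.divisors, ∑ h ∈ Icc 1 n with h.gcd n = d, h.gcd n :=
        (sum_fiberwise_of_maps_to maps _).symm
    _ = ∑ d ∈ n.divisors, #{h ∈ Icc 1 n | h.gcd n = d} * d := by
        refine sum_congr rfl fun d _ => ?_
        rw [sum_congr rfl fun h hh => (mem_filter.mp hh).2, sum_const, smul_eq_mul]
    _ ≤ ∑ _d ∈ n.divisors, n := sum_le_sum fun d _ => fiber_le d
    _ = n * #n.divisors := by rw [sum_const, smul_eq_mul, mul_comm]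

theorem card_pow_modEq_self_le (p : ℕ) (hp : p.Prime) :
    #{gh ∈ Icc 1 (p - 1) ×ˢ Icc 1 (p - 1) | gh.1 ^ gh.2 ≡ gh.2 [MOD p]} ≤
      (p - 1) * #(p - 1).divisors := by
  calc #{gh ∈ Icc 1 (p - 1) ×ˢ Icc 1 (p - 1) | gh.1 ^ gh.2 ≡ gh.2 [MOD p]}
      = ∑ h ∈ Icc 1 (p - 1), #{g ∈ Icc 1 (p - 1) | g ^ h ≡ h [MOD p]} := by
        simp only [card_filter, sum_product_right]
    _ ≤ ∑ h ∈ Icc 1 (p - 1), h.gcd (p - 1) := by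
        refine sum_le_sum fun h hh => ?_
        have hIcc : Icc 1 (p - 1) ⊆ range p := fun g hg => by
          rw [mem_Icc] at hg; rw [mem_range]; omega
        have hph : ¬p ∣ h := fun hdvd => by
          rw [mem_Icc] at hh; have := Nat.le_of_dvd (by omega) hdvd; omega
        exact (card_le_card (filter_subset_filter _ hIcc)).trans
          (card_filter_pow_modEq_le_gcd hp hph)
    _ ≤ (p - 1) * #(p - 1).divisors := sum_Icc_gcd_le _

/-- For a prime `p`, the number of pairs `(g,h)` with `1 ≤ g,h ≤ p-1` and `g^h ≡ h (mod p)`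
(no further restrictions) differs from `p-1` by at most `d(p-1) σ(p-1) √p (1 + ln p)`. -/
theorem fixed_points_gANY_hANY (p : ℕ) (hp : p.Prime) :
    |(Nat.card {gh : ℕ × ℕ // 1 ≤ gh.1 ∧ gh.1 ≤ p - 1 ∧ 1 ≤ gh.2 ∧ gh.2 ≤ p - 1 ∧
        gh.1 ^ gh.2 ≡ gh.2 [MOD p]} : ℝ) - ((p - 1 : ℕ) : ℝ)| ≤
    ((p - 1).divisors.card : ℝ) * (∑ e ∈ (p - 1).divisors, (e : ℝ)) *
      Real.sqrt p * (1 + Real.log p) := by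
  set n := p - 1
  have hn : n ≠ 0 := by have := hp.two_le; omega
  have hcard : Nat.card {gh : ℕ × ℕ // 1 ≤ gh.1 ∧ gh.1 ≤ n ∧ 1 ≤ gh.2 ∧ gh.2 ≤ n ∧
      gh.1 ^ gh.2 ≡ gh.2 [MOD p]} =
      #{gh ∈ Icc 1 n ×ˢ Icc 1 n | gh.1 ^ gh.2 ≡ gh.2 [MOD p]} := by
    rw [← Nat.card_eq_finsetCard]
    exact Nat.card_congr (Equiv.subtypeEquivRight fun gh => by simp [and_assoc])
  have hdiv : (1 : ℝ) ≤ #n.divisors := by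
    exact_mod_cast card_pos.mpr ⟨n, Nat.mem_divisors_self n hn⟩
  have hσ : (n : ℝ) ≤ ∑ e ∈ n.divisors, (e : ℝ) :=
    single_le_sum (f := fun e : ℕ => (e : ℝ)) (fun _ _ => by positivity)
      (Nat.mem_divisors_self n hn)
  have hsqrt : 1 ≤ Real.sqrt p := Real.one_le_sqrt.mpr (by exact_mod_cast hp.one_le)
  have hlog : 0 ≤ Real.log p := Real.log_nonneg (by exact_mod_cast hp.one_le)
  have hbound : (n : ℝ) * #n.divisors ≤
      #n.divisors * (∑ e ∈ n.divisors, (e : ℝ)) * Real.sqrt p * (1 + Real.log p) := by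
    calc (n : ℝ) * #n.divisors = #n.divisors * n * 1 * 1 := by ring
      _ ≤ _ := by gcongr; linarith
  rw [hcard]
  refine abs_sub_le_of_nonneg_of_le (by positivity) ?_ (by positivity) ?_
  · exact le_trans (by exact_mod_cast card_pow_modEq_self_le p hp) hbound
  · exact le_trans (le_mul_of_one_le_right (by positivity) hdiv) hbound
end

section
/- Let p be a prime. The map (g,h,a) ↦ (h,a) is a bijection between the set of triples (g,h,a) with 1 ≤ g,h,a ≤ p-1, gcd(h,a,p-1) = 1, g^h ≡ a (mod p) and g^a ≡ h (mod p), and the set of pairs (h,a) with 1 ≤ h,a ≤ p-1, gcd(h,a,p-1) = 1 and h^h ≡ a^a (mod p). In particular, for each such pair (h,a) the value of g with 1 ≤ g ≤ p-1 satisfying g^h ≡ a (mod p) and g^a ≡ h (mod p) exists and is unique. -/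
/-!
Write `gcd(h, a, p - 1) = 1` as a Bézout relation `x h + y a + z (p - 1) = 1`. In the group
`(ℤ/p)ˣ`, which is killed by `p - 1`, the relation `h^h = a^a` then makes
`g = a^x h^y` a solution of `g^h = a`, `g^a = h`; and any two solutions differ by an element
killed by `h`, `a` and `p - 1`, hence trivial.
-/

theorem Nat.exists_int_mul_add_mul_add_mul_eq_one {n h a : ℕ}
    (hgcd : Nat.gcd h (Nat.gcd a n) = 1) :
    ∃ x y z : ℤ, x * h + y * a + z * n = 1 := by
  obtain ⟨u, v, huv⟩ := Nat.isCoprime_iff_coprime.mpr hgcd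
  rw [Nat.gcd_eq_gcd_ab] at huv
  exact ⟨u, v * Nat.gcdA a n, v * Nat.gcdB a n, by linear_combination huv⟩

section CommGroup

variable {G : Type*} [CommGroup G] {n h a : ℕ}

theorem eq_of_pow_eq_pow_of_gcd_eq_one (hn : ∀ x : G, x ^ n = 1)
    (hgcd : Nat.gcd h (Nat.gcd a n) = 1) {g g' : G} (hh : g ^ h = g' ^ h) (ha : g ^ a = g' ^ a) :
    g = g' := by
  have hdvd (k : ℕ) (hk : g ^ k = g' ^ k) : orderOf (g / g') ∣ k :=
    orderOf_dvd_of_pow_eq_one (by rw [div_pow, hk, div_self'])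
  have : orderOf (g / g') ∣ 1 :=
    hgcd ▸ Nat.dvd_gcd (hdvd h hh) (Nat.dvd_gcd (hdvd a ha) (orderOf_dvd_of_pow_eq_one (hn _)))
  rwa [Nat.dvd_one, orderOf_eq_one_iff, div_eq_one] at this

theorem exists_pow_eq_and_pow_eq (hn : ∀ x : G, x ^ n = 1)
    (hgcd : Nat.gcd h (Nat.gcd a n) = 1) {H A : G} (hHA : H ^ h = A ^ a) :
    ∃ g : G, g ^ h = A ∧ g ^ a = H := by
  obtain ⟨x, y, z, hxyz⟩ := Nat.exists_int_mul_add_mul_add_mul_eq_one hgcd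
  have hHAz : H ^ (h : ℤ) = A ^ (a : ℤ) := by simp only [zpow_natCast, hHA]
  have reduce (B : G) : B ^ (x * h + y * a) = B := by
    rw [show x * h + y * a = 1 + (-z) * n by linear_combination hxyz, zpow_add, zpow_one,
      zpow_mul, zpow_natCast, hn, mul_one]
  refine ⟨A ^ x * H ^ y, ?_, ?_⟩
  · calc (A ^ x * H ^ y) ^ h = A ^ (x * h) * (H ^ (h : ℤ)) ^ y := by
          rw [← zpow_natCast, mul_zpow, ← zpow_mul, ← zpow_mul, ← zpow_mul, mul_comm y]
      _ = A ^ (x * h + y * a) := by rw [hHAz, ← zpow_mul, zpow_add, mul_comm (a : ℤ)]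
      _ = A := reduce A
  · calc (A ^ x * H ^ y) ^ a = (A ^ (a : ℤ)) ^ x * H ^ (y * a) := by
          rw [← zpow_natCast, mul_zpow, ← zpow_mul, ← zpow_mul, ← zpow_mul, mul_comm x]
      _ = H ^ (x * h + y * a) := by rw [← hHAz, ← zpow_mul, zpow_add, mul_comm (h : ℤ)]
      _ = H := reduce H

theorem existsUnique_pow_eq_and_pow_eq (hn : ∀ x : G, x ^ n = 1)
    (hgcd : Nat.gcd h (Nat.gcd a n) = 1) {H A : G} (hHA : H ^ h = A ^ a) :
    ∃! g : G, g ^ h = A ∧ g ^ a = H := by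
  obtain ⟨g, hg⟩ := exists_pow_eq_and_pow_eq hn hgcd hHA
  exact ⟨g, hg, fun g' hg' =>
    eq_of_pow_eq_pow_of_gcd_eq_one hn hgcd (hg'.1.trans hg.1.symm) (hg'.2.trans hg.2.symm)⟩

end CommGroup

theorem Nat.ModEq.pow_self_of_two_cycle {n g h a : ℕ} (hga : g ^ h ≡ a [MOD n])
    (hgh : g ^ a ≡ h [MOD n]) : h ^ h ≡ a ^ a [MOD n] :=
  calc h ^ h ≡ (g ^ a) ^ h [MOD n] := (hgh.pow h).symm
    _ = (g ^ h) ^ a := by rw [← pow_mul, ← pow_mul, mul_comm]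
    _ ≡ a ^ a [MOD n] := hga.pow a

namespace ZMod

theorem natCast_ne_zero_of_pos_of_le_sub_one {n g : ℕ} (hg : 1 ≤ g) (hg' : g ≤ n - 1) :
    (g : ZMod n) ≠ 0 := by
  rw [Ne, natCast_eq_zero_iff]
  intro hdvd
  have := Nat.le_of_dvd hg hdvd
  omega

variable {p : ℕ} [Fact p.Prime]

theorem existsUnique_nat_of_existsUnique_units {P : ZMod p → Prop}
    (hP : ∃! u : (ZMod p)ˣ, P u) : ∃! g : ℕ, 1 ≤ g ∧ g ≤ p - 1 ∧ P g := by
  obtain ⟨u, hu, huniq⟩ := hP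
  refine ⟨(u : ZMod p).val, ⟨val_pos.mpr u.ne_zero, ?_, by rwa [natCast_zmod_val]⟩, ?_⟩
  · have := val_lt (u : ZMod p); omega
  rintro g ⟨hg, hg', hPg⟩
  have hg0 := natCast_ne_zero_of_pos_of_le_sub_one hg hg'
  rw [← huniq (Units.mk0 _ hg0) hPg, Units.val_mk0, val_cast_of_lt (by omega)]

end ZMod

theorem existsUnique_two_cycle {p : ℕ} (hp : p.Prime) (h a : ℕ) (hh : 1 ≤ h) (hh' : h ≤ p - 1)
    (ha : 1 ≤ a) (ha' : a ≤ p - 1) (hgcd : Nat.gcd h (Nat.gcd a (p - 1)) = 1)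
    (hmod : h ^ h ≡ a ^ a [MOD p]) :
    ∃! g : ℕ, 1 ≤ g ∧ g ≤ p - 1 ∧ g ^ h ≡ a [MOD p] ∧ g ^ a ≡ h [MOD p] := by
  have := Fact.mk hp
  simp only [← ZMod.natCast_eq_natCast_iff, Nat.cast_pow] at hmod ⊢
  refine ZMod.existsUnique_nat_of_existsUnique_units
    (P := fun x : ZMod p => x ^ h = a ∧ x ^ a = h) ?_
  have hH := ZMod.natCast_ne_zero_of_pos_of_le_sub_one hh hh'
  have hA := ZMod.natCast_ne_zero_of_pos_of_le_sub_one ha ha'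
  simpa [Units.ext_iff] using existsUnique_pow_eq_and_pow_eq
    (ZMod.units_pow_card_sub_one_eq_one p) hgcd (H := Units.mk0 _ hH) (A := Units.mk0 _ hA)
    (Units.ext (by simpa using hmod))

/-- For a prime `p`, the map `(g,h,a) ↦ (h,a)` is a bijection between the set of two-cycle
triples with `gcd(h,a,p-1) = 1` and the set of pairs `(h,a)` with `gcd(h,a,p-1) = 1` and
`h^h ≡ a^a (mod p)`; in particular for each such pair the corresponding `g` exists and is
unique. -/
theorem two_cycle_bijection (p : ℕ) (hp : p.Prime) :
    Set.BijOn (fun t : ℕ × ℕ × ℕ => (t.2.1, t.2.2))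
      {t : ℕ × ℕ × ℕ | 1 ≤ t.1 ∧ t.1 ≤ p - 1 ∧ 1 ≤ t.2.1 ∧ t.2.1 ≤ p - 1 ∧
        1 ≤ t.2.2 ∧ t.2.2 ≤ p - 1 ∧ Nat.gcd t.2.1 (Nat.gcd t.2.2 (p - 1)) = 1 ∧
        t.1 ^ t.2.1 ≡ t.2.2 [MOD p] ∧ t.1 ^ t.2.2 ≡ t.2.1 [MOD p]}
      {ha : ℕ × ℕ | 1 ≤ ha.1 ∧ ha.1 ≤ p - 1 ∧ 1 ≤ ha.2 ∧ ha.2 ≤ p - 1 ∧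
        Nat.gcd ha.1 (Nat.gcd ha.2 (p - 1)) = 1 ∧ ha.1 ^ ha.1 ≡ ha.2 ^ ha.2 [MOD p]} ∧
    ∀ h a : ℕ, 1 ≤ h → h ≤ p - 1 → 1 ≤ a → a ≤ p - 1 →
      Nat.gcd h (Nat.gcd a (p - 1)) = 1 → h ^ h ≡ a ^ a [MOD p] →
      ∃! g : ℕ, 1 ≤ g ∧ g ≤ p - 1 ∧ g ^ h ≡ a [MOD p] ∧ g ^ a ≡ h [MOD p] := by
  refine ⟨⟨?mapsTo, ?injOn, ?surjOn⟩, existsUnique_two_cycle hp⟩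
  case mapsTo =>
    rintro ⟨g, h, a⟩ ⟨-, -, hh, hh', ha, ha', hgcd, hga, hgh⟩
    exact ⟨hh, hh', ha, ha', hgcd, hga.pow_self_of_two_cycle hgh⟩
  case injOn =>
    rintro ⟨g, h, a⟩ ⟨hg, hg', hh, hh', ha, ha', hgcd, hga, hgh⟩
      ⟨g', h', a'⟩ ⟨hg₁, hg₁', -, -, -, -, -, hga', hgh'⟩ heq
    simp only [Prod.mk.injEq] at heq
    obtain ⟨rfl, rfl⟩ := heq
    have hg_eq : g = g' := (existsUnique_two_cycle hp h a hh hh' ha ha' hgcd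
      (hga.pow_self_of_two_cycle hgh)).unique ⟨hg, hg', hga, hgh⟩ ⟨hg₁, hg₁', hga', hgh'⟩
    rw [hg_eq]
  case surjOn =>
    rintro ⟨h, a⟩ ⟨hh, hh', ha, ha', hgcd, hmod⟩
    obtain ⟨g, ⟨hg, hg', hga, hgh⟩, -⟩ := existsUnique_two_cycle hp h a hh hh' ha ha' hgcd hmod
    exact ⟨(g, h, a), ⟨hg, hg', hh, hh', ha, ha', hgcd, hga, hgh⟩, rfl⟩
end

section
/- Let p be a prime. The number of pairs (g,h) with 1 ≤ g,h ≤ p-1 such that g^h ≡ h (mod p) and gcd(h,p-1) = 1 is exactly φ(p-1). -/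
/-! For `h` coprime to `p - 1 = #(ZMod p)ˣ`, the map `x ↦ x ^ h` permutes `(ZMod p)ˣ`, so each such `h`
has exactly one `g ∈ [1, p - 1]` with `g ^ h ≡ h (mod p)`. The pairs are therefore in bijection with
the `h ∈ [1, p - 1]` coprime to `p - 1`, of which there are `φ (p - 1)`. -/

theorem Nat.card_coprime_Icc_eq_totient (n : ℕ) :
    Nat.card {h : ℕ // 1 ≤ h ∧ h ≤ n ∧ h.Coprime n} = n.totient := by
  rw [← Nat.filter_coprime_Ico_eq_totient n 1, ← Nat.card_eq_finsetCard]
  refine Nat.card_congr (Equiv.subtypeEquivRight fun h => ?_)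
  simp only [Finset.mem_filter, Finset.mem_Ico, Nat.coprime_comm]
  omega

theorem Nat.card_subtype_eq_of_existsUnique_fst {α β : Type*} {R : α × β → Prop} {Q : β → Prop}
    (hRQ : ∀ ab, R ab → Q ab.2) (hQR : ∀ b, Q b → ∃! a, R (a, b)) :
    Nat.card {ab // R ab} = Nat.card {b // Q b} := by
  refine Nat.card_congr (Equiv.ofBijective (fun ab => ⟨ab.1.2, hRQ _ ab.2⟩) ⟨?_, ?_⟩)
  · rintro ⟨⟨a, b⟩, hab⟩ ⟨⟨a', b'⟩, hab'⟩ heq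
    obtain rfl : b = b' := congrArg Subtype.val heq
    obtain rfl : a = a' := (hQR b (hRQ _ hab)).unique hab hab'
    rfl
  · rintro ⟨b, hb⟩
    obtain ⟨a, ha, -⟩ := hQR b hb
    exact ⟨⟨(a, b), ha⟩, rfl⟩

theorem ZMod.existsUnique_pow_eq_of_coprime {p h : ℕ} [Fact p.Prime] (hh : h.Coprime (p - 1))
    (a : (ZMod p)ˣ) : ∃! x : (ZMod p)ˣ, x ^ h = a := by
  have hcard : (Nat.card (ZMod p)ˣ).Coprime h := by
    rw [Nat.card_eq_fintype_card, ZMod.card_units]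
    exact hh.symm
  exact hcard.pow_left_bijective.existsUnique a

theorem Nat.existsUnique_pow_modEq {p h a : ℕ} (hp : p.Prime) (hh : h.Coprime (p - 1))
    (ha : ¬ p ∣ a) : ∃! g, 1 ≤ g ∧ g ≤ p - 1 ∧ g ^ h ≡ a [MOD p] := by
  have := Fact.mk hp
  have cast_ne_zero {n : ℕ} (hn : ¬ p ∣ n) : (n : ZMod p) ≠ 0 := by
    rwa [Ne, ZMod.natCast_eq_zero_iff]
  obtain ⟨x, hx, hx_unique⟩ :=
    ZMod.existsUnique_pow_eq_of_coprime hh (Units.mk0 _ (cast_ne_zero ha))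
  have hx_val : ((x : ZMod p).val : ZMod p) = x := ZMod.natCast_zmod_val _
  refine ⟨(x : ZMod p).val, ⟨?_, ?_, ?_⟩, ?_⟩
  · exact Nat.pos_of_ne_zero fun h0 => x.ne_zero (by rw [← hx_val, h0, Nat.cast_zero])
  · have := ZMod.val_lt (x : ZMod p)
    omega
  · rw [← ZMod.natCast_eq_natCast_iff]
    push_cast
    rw [hx_val, ← Units.val_pow_eq_pow_val, hx, Units.val_mk0]
  · rintro g ⟨hg1, hgp, hg⟩
    have hg0 : (g : ZMod p) ≠ 0 := cast_ne_zero (Nat.not_dvd_of_pos_of_lt hg1 (by omega))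
    have hgx : Units.mk0 _ hg0 = x :=
      hx_unique _ (Units.ext (by simpa [← ZMod.natCast_eq_natCast_iff] using hg))
    rw [← hgx, Units.val_mk0, ZMod.val_cast_of_lt (by omega)]

/-- For a prime `p`, the number of pairs `(g,h)` with `1 ≤ g,h ≤ p-1`, `g^h ≡ h (mod p)`
and `gcd(h, p-1) = 1` is exactly `φ(p-1)`. -/
theorem fixed_points_hRP_count (p : ℕ) (hp : p.Prime) :
    Nat.card {gh : ℕ × ℕ // 1 ≤ gh.1 ∧ gh.1 ≤ p - 1 ∧ 1 ≤ gh.2 ∧ gh.2 ≤ p - 1 ∧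
        gh.1 ^ gh.2 ≡ gh.2 [MOD p] ∧ Nat.gcd gh.2 (p - 1) = 1} = (p - 1).totient := by
  rw [← Nat.card_coprime_Icc_eq_totient]
  apply Nat.card_subtype_eq_of_existsUnique_fst
  · rintro ⟨g, h⟩ ⟨-, -, h1, hp1, -, hc⟩
    exact ⟨h1, hp1, hc⟩
  · rintro h ⟨h1, hp1, hc⟩
    have hh : ¬ p ∣ h := Nat.not_dvd_of_pos_of_lt h1 (by omega)
    refine (existsUnique_congr fun g => ?_).mp (Nat.existsUnique_pow_modEq hp hc hh)
    simp only [h1, hp1, hc, true_and, and_true]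
end
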